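/- Let G be a real special 2-group with associated quadratic map q : V → W. For v ∈ V let S_v = {s ∈ Hom(W, F₂) : v ∈ rad(s∘b_q)}. Then the conjugacy class of an element (v,w) ∈ G is {(v, w+w') : s(w') = 0 for all s ∈ S_v}. -/

import Mathlib

structure IsSpecial2Group (G : Type*) [Group G] [Finite G] : Prop where
  card_pow : ∃ n : ℕ, Nat.card G = 2 ^ n
  frattini_eq : frattini G = Subgroup.center G
  commutator_eq : commutator G = Subgroup.center G
  sq_eq_one : ∀ g ∈ Subgroup.center G, g * g = 1

open scoped commutatorElement

/-
Since all commutators are central, `c x c⁻¹ = x ⁅x, c⁻¹⁆`, so the conjugacy class of `x` is `x`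
times the image of `y ↦ ⁅x, y⁆`, which is a homomorphism `G →* Z(G)` by centrality again. As `Z(G)`
is an `𝔽₂`-vector space, that image is the common kernel of the characters `Z(G) → 𝔽₂` vanishing
on it, and these are exactly the `s ∈ S_v`.
-/

open Subgroup

theorem Subgroup.mem_of_forall_monoidHom_zmod_two_eq_one {A : Type*} [Group A]
    [IsMulCommutative A] (hA : ∀ a : A, a * a = 1) (H : Subgroup A) {z : A}
    (hz : ∀ s : A →* Multiplicative (ZMod 2), (∀ h ∈ H, s h = 1) → s z = 1) : z ∈ H := by
  open scoped IsMulCommutative in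
  let _ : Module (ZMod 2) (Additive A) :=
    AddCommGroup.zmodModule fun a => by rw [two_nsmul]; exact hA a.toMul
  show Additive.ofMul z ∈ AddSubgroup.toZModSubmodule 2 H.toAddSubgroup
  rw [← Subspace.forall_mem_dualAnnihilator_apply_eq_zero_iff]
  intro φ hφ
  exact hz (AddMonoidHom.toMultiplicativeRight φ.toAddMonoidHom)
    fun h hh => congrArg Multiplicative.ofAdd ((Submodule.mem_dualAnnihilator φ).mp hφ _ hh)

section CentralCommutators

variable {G : Type*} [Group G]

theorem conj_eq_mul_commutatorElement_inv {x c : G} (h : ⁅x, c⁻¹⁆ ∈ center G) :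
    c * x * c⁻¹ = x * ⁅x, c⁻¹⁆ := by
  have hk : ⁅x, c⁻¹⁆ = c * x * c⁻¹ * x⁻¹ := calc
    ⁅x, c⁻¹⁆ = c * ⁅x, c⁻¹⁆ * c⁻¹ := by rw [mem_center_iff.mp h c]; group
    _ = c * x * c⁻¹ * x⁻¹ := by rw [commutatorElement_def]; group
  rw [mem_center_iff.mp h x, hk]; group

theorem commutatorElement_mul_right_of_mem_center {x y z : G} (h : ⁅x, z⁆ ∈ center G) :
    ⁅x, y * z⁆ = ⁅x, y⁆ * ⁅x, z⁆ := by
  rw [commutatorElement_mul_right_eq_mul_conj, mul_assoc _ y, mem_center_iff.mp h y]; group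

def commutatorElementHom (x : G) (hx : ∀ y, ⁅x, y⁆ ∈ center G) : G →* center G where
  toFun y := ⟨⁅x, y⁆, hx y⟩
  map_one' := Subtype.ext (commutatorElement_one_right x)
  map_mul' _ z := Subtype.ext (commutatorElement_mul_right_of_mem_center (hx z))

theorem isConj_iff_exists_eq_mul_commutatorElement {x g : G} (hx : ∀ y, ⁅x, y⁆ ∈ center G) :
    IsConj x g ↔ ∃ y, g = x * ⁅x, y⁆ := by
  rw [isConj_iff]
  constructor
  · rintro ⟨c, rfl⟩
    exact ⟨c⁻¹, conj_eq_mul_commutatorElement_inv (hx _)⟩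
  · rintro ⟨y, rfl⟩
    exact ⟨y⁻¹, by simpa using conj_eq_mul_commutatorElement_inv (c := y⁻¹) (hx _)⟩

end CentralCommutators

theorem conjugacy_class_via_radical_general (G : Type*) [Group G] [Finite G]
    (hG : IsSpecial2Group G)
    (hcomm : ∀ x y : G, ⁅x, y⁆ ∈ Subgroup.center G)
    (x : G) :
    ∀ g : G, IsConj x g ↔
      ∃ z : Subgroup.center G,
        (∀ s : Subgroup.center G →* Multiplicative (ZMod 2),
          (∀ y : G, s ⟨⁅x, y⁆, hcomm x y⟩ = 1) → s z = 1) ∧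
        g = x * (z : G) := by
  intro g
  let φ := commutatorElementHom x (hcomm x)
  have hsq : ∀ z : center G, z * z = 1 := fun z => Subtype.ext (hG.sq_eq_one z z.2)
  rw [isConj_iff_exists_eq_mul_commutatorElement (hcomm x)]
  constructor
  · rintro ⟨y, rfl⟩
    exact ⟨φ y, fun s hs => hs y, rfl⟩
  · rintro ⟨z, hz, rfl⟩
    obtain ⟨y, rfl⟩ : z ∈ φ.range := φ.range.mem_of_forall_monoidHom_zmod_two_eq_one hsq
      fun s hs => hz s fun y => hs _ ⟨y, rfl⟩
    exact ⟨y, rfl⟩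

/-- Let `G` be a real special 2-group with associated quadratic map
`q : V = G/Z(G) → W = Z(G)`, the linear maps `W → F₂` being the homomorphisms
`Z(G) →* Multiplicative (ZMod 2)`.  For `x ∈ G` representing `v ∈ V`, let
`S_v = {s : v ∈ rad(s∘b_q)} = {s : s(⁅x,y⁆) = 1 ∀ y}`.  Then the conjugacy class
of `x = (v,w)` is `{(v, w+w') : s(w') = 0 for all s ∈ S_v}`, i.e. the conjugates
of `x` are exactly the elements `x·z` with `z ∈ Z(G)` annihilated by every
`s ∈ S_v`. -/
theorem conjugacy_class_via_radical (G : Type*) [Group G] [Finite G]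
    (hG : IsSpecial2Group G)
    (hreal : ∀ x : G, IsConj x x⁻¹)
    (hcomm : ∀ x y : G, ⁅x, y⁆ ∈ Subgroup.center G)
    (x : G) :
    ∀ g : G, IsConj x g ↔
      ∃ z : Subgroup.center G,
        (∀ s : Subgroup.center G →* Multiplicative (ZMod 2),
          (∀ y : G, s ⟨⁅x, y⁆, hcomm x y⟩ = 1) → s z = 1) ∧
        g = x * (z : G) :=
  conjugacy_class_via_radical_general G hG hcomm x
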